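/- For every m ≥ 1, the first three occurrences of E_{1,m} in the period-doubling sequence D start at positions 1, 2^m + 1 and 3·2^{m−1} + 1; consequently r_0(E_{1,m}) is the empty word, r_1(E_{1,m}) = A_m, and r_2(E_{1,m}) = A_{m−1}. -/

import Mathlib

/-- The alphabet: letters a, b (for the period-doubling sequence) and c (used by Θ₂). -/
inductive Letter : Type
  | a | b | c
deriving DecidableEq, Repr

open Letter

/-- The period-doubling substitution σ : a ↦ ab, b ↦ aa, extended to words
(the extra letter c is left untouched; it is never produced). -/
def sigmaw : List Letter → List Letter :=
  fun w => w.flatMap fun x => match x with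
    | .a => [.a, .b]
    | .b => [.a, .a]
    | .c => [.c]

/-- A_m = σ^m(a). -/
def A (m : ℕ) : List Letter := sigmaw^[m] [.a]

/-- B_m = σ^m(b). -/
def B (m : ℕ) : List Letter := sigmaw^[m] [.b]

/-- δ_m, the last letter of A_m. -/
def delta (m : ℕ) : Letter := (A m).getLastD .a

/-- The period-doubling sequence D, as a function giving its (n+1)-st letter
(0-indexed); it is the fixed point of σ beginning with a, and A_{n+1} is a
prefix of it of length 2^{n+1} > n. -/
def D (n : ℕ) : Letter := (A (n + 1)).getD n .a

/-- The finite segment D[i .. i+len−1] of the period-doubling sequence,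
with 1-based starting position i. -/
def Dseg (i len : ℕ) : List Letter := (List.range len).map fun k => D (i - 1 + k)

/-- u occurs in the finite word w at (1-based) position i. -/
def OccursAt {α : Type*} (u w : List α) (i : ℕ) : Prop :=
  1 ≤ i ∧ i - 1 + u.length ≤ w.length ∧ (w.drop (i - 1)).take u.length = u

/-- u is a factor of the finite word w. -/
def IsFactor {α : Type*} (u w : List α) : Prop := ∃ i, OccursAt u w i

/-- u occurs in the period-doubling sequence D at (1-based) position i. -/
def DOccursAt (u : List Letter) (i : ℕ) : Prop := 1 ≤ i ∧ Dseg i u.length = u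

/-- u is a factor of the period-doubling sequence D. -/
def FactorD (u : List Letter) : Prop := ∃ i, DOccursAt u i

/-- L(u,p): the starting position of the p-th occurrence (p ≥ 1) of u in D. -/
noncomputable def L (u : List Letter) (p : ℕ) : ℕ := Nat.nth (DOccursAt u) (p - 1)

/-- r_p(u): the p-th return word of u (p ≥ 1), i.e. D[L(u,p) .. L(u,p+1)−1];
r_0(u) is the prefix of D preceding the first occurrence of u. -/
noncomputable def r (u : List Letter) (p : ℕ) : List Letter :=
  if p = 0 then Dseg 1 (L u 1 - 1) else Dseg (L u p) (L u (p + 1) - L u p)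

/-- The morphism τ₁ : a ↦ a, b ↦ bb, extended to words. -/
def tau1 : List Letter → List Letter :=
  fun w => w.flatMap fun x => match x with
    | .a => [.a]
    | .b => [.b, .b]
    | .c => [.c]

/-- The morphism τ₂ : a ↦ ab, b ↦ acac, extended to words. -/
def tau2 : List Letter → List Letter :=
  fun w => w.flatMap fun x => match x with
    | .a => [.a, .b]
    | .b => [.a, .c, .a, .c]
    | .c => [.c]

/-- Θ₁[p], the p-th letter (p ≥ 1) of Θ₁ = τ₁(D): since |τ₁(w)| ≥ |w|, the p-th
letter of Θ₁ is the p-th letter of the image of the length-p prefix of D. -/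
def Theta1 (p : ℕ) : Letter := (tau1 (Dseg 1 p)).getD (p - 1) .a

/-- Θ₂[p], the p-th letter (p ≥ 1) of Θ₂ = τ₂(D). -/
def Theta2 (p : ℕ) : Letter := (tau2 (Dseg 1 p)).getD (p - 1) .a

/-- The envelope word E_{1,m} = A_m with its last letter δ_m deleted. -/
def E1 (m : ℕ) : List Letter := (A m).dropLast

/-- The envelope word E_{2,m} = B_m B_{m−1} with its last letter δ_m deleted. -/
def E2 (m : ℕ) : List Letter := (B m ++ B (m - 1)).dropLast

/-- Enumeration of the envelope words in the order
E_{1,1} ⊏ E_{2,1} ⊏ E_{1,2} ⊏ E_{2,2} ⊏ …. -/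
def Eword (k : ℕ) : List Letter := if k % 2 = 0 then E1 (k / 2 + 1) else E2 (k / 2 + 1)

/-- Env(u): the ⊏-least envelope word having u as a factor. -/
noncomputable def Env (u : List Letter) : List Letter :=
  Eword (sInf {k | IsFactor u (Eword k)})

/-- The letterwise complement exchanging a and b. -/
def comp : Letter → Letter
  | .a => .b
  | .b => .a
  | .c => .c

/-!
The letters of `D` satisfy `D (2n) = a` and `D (2n+1) = comp (D n)`, and `E_{1,m}` is the prefix
of `D` of length `2^m - 1`. For `m ≥ 1` the prefix of length `2^(m+1) - 1` has `b` at index 1,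
so it can only reoccur at an even index `2t`, and by the two recurrences it does so iff the prefix
of length `2^m - 1` reoccurs at `t`. By induction, the occurrences of `E_{1,m+1}` start at the
(0-based) indices `2^m t` with `D t = a`; as `D = abaa…`, the first three such `t` are `0, 2, 3`.
-/

lemma sigmaw_append (u v : List Letter) : sigmaw (u ++ v) = sigmaw u ++ sigmaw v :=
  List.flatMap_append ..

lemma sigmaw_cons {x : Letter} (hx : x ≠ c) (w : List Letter) :
    sigmaw (x :: w) = a :: comp x :: sigmaw w := by
  cases x
  · rfl
  · rfl
  · contradiction

lemma c_mem_sigmaw_iff {w : List Letter} : c ∈ sigmaw w ↔ c ∈ w := by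
  simp only [sigmaw, List.mem_flatMap]
  constructor
  · rintro ⟨x, hx, hcx⟩
    cases x <;> simp_all
  · exact fun h => ⟨c, h, List.mem_singleton_self c⟩

lemma length_sigmaw {w : List Letter} (hw : c ∉ w) : (sigmaw w).length = 2 * w.length := by
  induction w with
  | nil => rfl
  | cons x w ih =>
    rw [List.mem_cons, not_or] at hw
    rw [sigmaw_cons (Ne.symm hw.1), List.length_cons, List.length_cons, ih hw.2, List.length_cons]
    ring

lemma getD_sigmaw_two_mul {w : List Letter} (hw : c ∉ w) (n : ℕ) :
    (sigmaw w).getD (2 * n) a = a := by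
  induction w generalizing n with
  | nil => rfl
  | cons x w ih =>
    rw [List.mem_cons, not_or] at hw
    rw [sigmaw_cons (Ne.symm hw.1)]
    cases n with
    | zero => rfl
    | succ n => simpa [Nat.mul_succ] using ih hw.2 n

lemma getD_sigmaw_two_mul_add_one {w : List Letter} (hw : c ∉ w) {n : ℕ} (hn : n < w.length) :
    (sigmaw w).getD (2 * n + 1) a = comp (w.getD n a) := by
  induction w generalizing n with
  | nil => simp at hn
  | cons x w ih =>
    rw [List.mem_cons, not_or] at hw
    rw [sigmaw_cons (Ne.symm hw.1)]
    cases n with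
    | zero => rfl
    | succ n => simpa [Nat.mul_succ] using ih hw.2 (Nat.lt_of_succ_lt_succ hn)

lemma List.IsPrefix.sigmaw {u v : List Letter} (h : u <+: v) : sigmaw u <+: sigmaw v := by
  obtain ⟨t, rfl⟩ := h
  exact ⟨_root_.sigmaw t, (sigmaw_append u t).symm⟩

lemma A_succ (m : ℕ) : A (m + 1) = sigmaw (A m) :=
  Function.iterate_succ_apply' ..

lemma c_not_mem_A (m : ℕ) : c ∉ A m := by
  induction m with
  | zero => simp [A]
  | succ m ih => rwa [A_succ, c_mem_sigmaw_iff]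

lemma length_A (m : ℕ) : (A m).length = 2 ^ m := by
  induction m with
  | zero => rfl
  | succ m ih => rw [A_succ, length_sigmaw (c_not_mem_A m), ih, pow_succ, mul_comm]

lemma A_prefix_A_succ (m : ℕ) : A m <+: A (m + 1) := by
  induction m with
  | zero => exact ⟨[b], rfl⟩
  | succ m ih =>
    rw [A_succ, A_succ (m + 1)]
    exact ih.sigmaw

lemma A_prefix_A {m n : ℕ} (h : m ≤ n) : A m <+: A n := by
  induction n, h using Nat.le_induction with
  | base => exact List.prefix_refl _
  | succ n _ ih => exact ih.trans (A_prefix_A_succ n)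

lemma D_eq_getD_A {k M : ℕ} (hk : k < 2 ^ M) : D k = (A M).getD k a := by
  have getD_eq {u v : List Letter} (h : u <+: v) (hk : k < u.length) :
      v.getD k a = u.getD k a := by
    obtain ⟨t, rfl⟩ := h
    exact List.getD_append u t a k hk
  rcases le_total (k + 1) M with h | h
  · have hk' : k < 2 ^ (k + 1) := by rw [pow_succ]; have := k.lt_two_pow_self; omega
    exact (getD_eq (A_prefix_A h) (by rwa [length_A])).symm
  · exact getD_eq (A_prefix_A h) (by rwa [length_A])

lemma D_two_mul (n : ℕ) : D (2 * n) = a := by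
  rw [D_eq_getD_A (M := n + 1) (by rw [pow_succ]; have := n.lt_two_pow_self; omega), A_succ]
  exact getD_sigmaw_two_mul (c_not_mem_A n) n

lemma D_two_mul_add_one (n : ℕ) : D (2 * n + 1) = comp (D n) := by
  have hn := n.lt_two_pow_self
  rw [D_eq_getD_A (M := n + 1) (by rw [pow_succ]; omega), A_succ, D_eq_getD_A hn]
  exact getD_sigmaw_two_mul_add_one (c_not_mem_A n) (by rwa [length_A])

lemma comp_injective : Function.Injective comp := by
  intro x y h
  cases x <;> cases y <;> first | rfl | exact absurd h (by decide)

lemma D_zero : D 0 = a := D_two_mul 0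

lemma D_one : D 1 = b := by simpa [D_zero, comp] using D_two_mul_add_one 0

lemma D_two : D 2 = a := D_two_mul 1

lemma D_three : D 3 = a := by simpa [D_one, comp] using D_two_mul_add_one 1

lemma length_Dseg (i n : ℕ) : (Dseg i n).length = n := by
  simp [Dseg]

lemma getElem_Dseg (i n k : ℕ) (hk : k < (Dseg i n).length) : (Dseg i n)[k] = D (i - 1 + k) := by
  simp [Dseg]

lemma Dseg_one_two_pow (m : ℕ) : Dseg 1 (2 ^ m) = A m := by
  refine List.ext_getElem (by rw [length_Dseg, length_A]) fun k hk _ => ?_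
  have hk' : k < 2 ^ m := by rwa [length_Dseg] at hk
  rw [getElem_Dseg, ← List.getD_eq_getElem _ a, ← D_eq_getD_A hk', Nat.sub_self, zero_add]

lemma E1_eq_Dseg (m : ℕ) : E1 m = Dseg 1 (2 ^ m - 1) := by
  rw [E1, ← Dseg_one_two_pow, Dseg, List.dropLast_eq_take, Dseg, List.length_map,
    List.length_range, ← List.map_take, List.take_range, min_eq_left (Nat.sub_le _ _)]

-- `j` is a 0-based index, unlike the 1-based positions of `DOccursAt`.
def PrefixRepeatsAt (n j : ℕ) : Prop := ∀ k < n, D (j + k) = D k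

lemma Dseg_eq_Dseg_one_iff (j n : ℕ) : Dseg (j + 1) n = Dseg 1 n ↔ PrefixRepeatsAt n j := by
  simp [Dseg, PrefixRepeatsAt, List.map_inj_left]

lemma prefixRepeatsAt_two_pow_add_two_iff (m j : ℕ) :
    PrefixRepeatsAt (2 ^ (m + 2) - 1) j ↔
      ∃ t, j = 2 * t ∧ PrefixRepeatsAt (2 ^ (m + 1) - 1) t := by
  have hpow : 2 ^ (m + 2) = 2 * 2 ^ (m + 1) := by ring
  have hpos := Nat.one_lt_two_pow_iff.mpr m.succ_ne_zero
  constructor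
  · intro h
    have hb : D (j + 1) = b := (h 1 (by omega)).trans D_one
    obtain ⟨t, rfl | rfl⟩ := Nat.even_or_odd' j
    · refine ⟨t, rfl, fun k hk => comp_injective ?_⟩
      have := h (2 * k + 1) (by omega)
      rwa [← add_assoc, ← mul_add, D_two_mul_add_one, D_two_mul_add_one] at this
    · rw [add_assoc, ← mul_add_one, D_two_mul] at hb
      cases hb
  · rintro ⟨t, rfl, h⟩ k hk
    obtain ⟨l, rfl | rfl⟩ := Nat.even_or_odd' k
    · rw [← mul_add, D_two_mul, D_two_mul]
    · rw [← add_assoc, ← mul_add, D_two_mul_add_one, D_two_mul_add_one, h l (by omega)]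

lemma prefixRepeatsAt_two_pow_succ_iff (m j : ℕ) :
    PrefixRepeatsAt (2 ^ (m + 1) - 1) j ↔ ∃ t, j = 2 ^ m * t ∧ D t = a := by
  induction m generalizing j with
  | zero => simp [PrefixRepeatsAt, D_zero]
  | succ m ih =>
    simp_rw [prefixRepeatsAt_two_pow_add_two_iff, ih]
    constructor
    · rintro ⟨t, rfl, s, rfl, hs⟩
      exact ⟨s, by ring, hs⟩
    · rintro ⟨s, rfl, hs⟩
      exact ⟨2 ^ m * s, by ring, s, rfl, hs⟩

lemma DOccursAt_E1_succ_iff (m i : ℕ) :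
    DOccursAt (E1 (m + 1)) i ↔ ∃ t, i = 2 ^ m * t + 1 ∧ D t = a := by
  rw [DOccursAt, E1_eq_Dseg, length_Dseg]
  constructor
  · rintro ⟨hi, h⟩
    obtain ⟨j, rfl⟩ := Nat.exists_eq_add_of_le' hi
    obtain ⟨t, rfl, ht⟩ :=
      (prefixRepeatsAt_two_pow_succ_iff m j).mp ((Dseg_eq_Dseg_one_iff _ _).mp h)
    exact ⟨t, rfl, ht⟩
  · rintro ⟨t, rfl, ht⟩
    exact ⟨le_add_self, (Dseg_eq_Dseg_one_iff _ _).mpr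
      ((prefixRepeatsAt_two_pow_succ_iff m _).mpr ⟨t, rfl, ht⟩)⟩

lemma L_E1_succ (m n : ℕ) : L (E1 (m + 1)) (n + 1) = 2 ^ m * Nat.nth (D · = a) n + 1 := by
  have hmono : StrictMono fun t => 2 ^ m * t + 1 := fun s t hst =>
    Nat.add_lt_add_right (Nat.mul_lt_mul_of_pos_left hst (Nat.two_pow_pos m)) 1
  have hinf : (Set.ofPred (DOccursAt (E1 (m + 1)))).Infinite :=
    Set.infinite_of_injective_forall_mem (hmono.comp (strictMono_mul_left_of_pos two_pos)).injective
      fun s => (DOccursAt_E1_succ_iff m _).mpr ⟨2 * s, rfl, D_two_mul s⟩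
  rw [L, Nat.add_sub_cancel, ← Nat.nth_comp_of_strictMono hmono
    (fun i hi => ((DOccursAt_E1_succ_iff m i).mp hi).imp fun t ht => ht.1.symm)
    (fun hfin => absurd hfin hinf)]
  congr
  funext t
  rw [DOccursAt_E1_succ_iff]
  exact propext ⟨fun ⟨s, hs, h⟩ => hmono.injective hs ▸ h, fun h => ⟨t, rfl, h⟩⟩

lemma nth_D_eq_a_zero : Nat.nth (D · = a) 0 = 0 := Nat.nth_zero_of_zero D_zero

lemma nth_D_eq_a_one : Nat.nth (D · = a) 1 = 2 := by
  simpa [Nat.count_succ, D_zero, D_one] using Nat.nth_count (p := (D · = a)) D_two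

lemma nth_D_eq_a_two : Nat.nth (D · = a) 2 = 3 := by
  simpa [Nat.count_succ, D_zero, D_one, D_two] using Nat.nth_count (p := (D · = a)) D_three

/-- For every m ≥ 1, the first three occurrences of E_{1,m} in D start at
positions 1, 2^m + 1 and 3·2^{m−1} + 1; consequently r_0(E_{1,m}) = ε,
r_1(E_{1,m}) = A_m and r_2(E_{1,m}) = A_{m−1}. -/
theorem first_occurrences_E1 (m : ℕ) (hm : 1 ≤ m) :
    L (E1 m) 1 = 1 ∧ L (E1 m) 2 = 2 ^ m + 1 ∧ L (E1 m) 3 = 3 * 2 ^ (m - 1) + 1 ∧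
    r (E1 m) 0 = [] ∧ r (E1 m) 1 = A m ∧ r (E1 m) 2 = A (m - 1) := by
  obtain ⟨m, rfl⟩ := Nat.exists_eq_add_of_le' hm
  have hL1 : L (E1 (m + 1)) 1 = 1 := by simpa [nth_D_eq_a_zero] using L_E1_succ m 0
  have hL2 : L (E1 (m + 1)) 2 = 2 ^ (m + 1) + 1 := by
    simpa [nth_D_eq_a_one, pow_succ] using L_E1_succ m 1
  have hL3 : L (E1 (m + 1)) 3 = 3 * 2 ^ m + 1 := by
    simpa [nth_D_eq_a_two, mul_comm] using L_E1_succ m 2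
  have hA : Dseg (2 ^ (m + 1) + 1) (2 ^ m) = A m := by
    have := (prefixRepeatsAt_two_pow_succ_iff m (2 ^ (m + 1))).mpr ⟨2, by ring, D_two⟩
    rw [← Dseg_one_two_pow, Dseg_eq_Dseg_one_iff]
    exact fun k hk => this k (by rw [pow_succ]; omega)
  refine ⟨hL1, hL2, by simpa using hL3, by simp [r, hL1, Dseg], ?_, ?_⟩
  · simpa [r, hL1, hL2] using Dseg_one_two_pow (m + 1)
  · have hgap : 3 * 2 ^ m + 1 - (2 ^ (m + 1) + 1) = 2 ^ m := by rw [pow_succ]; omega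
    simpa [r, hL2, hL3, hgap] using hA
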